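/- For a nonpositive integer $k = -m$ ($m \in \mathbb{N}_0$) and reals $n > 0$, $C > 0$, $N \geq 1$, $Y > 0$, we have $\int_0^\infty e^{-C(\sqrt{N}x + \frac{1}{\sqrt{N}x})} e^{2\pi n x}\Gamma(1+m, 4\pi n x) e^{-\frac{1}{xY}}\frac{dx}{x} = \sum_{\ell=0}^{m}\frac{2\, m!}{\ell!}\left(\frac{4\pi\sqrt{C}}{\sqrt{N}}\sqrt{1 + \frac{\sqrt{N}}{CY}}\right)^\ell \left(\frac{n}{\sqrt{D_n}}\right)^\ell K_\ell\left(2\sqrt{D_n\left(C + \frac{\sqrt{N}}{Y}\right)}\right)$, where $D_n = C + 2\pi n/\sqrt{N}$. -/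

import Mathlib

open MeasureTheory Set Real

/-- The modified Bessel function of the second kind, via its integral representation. -/
noncomputable def besselK (s : ℂ) (z : ℝ) : ℂ :=
  (1 / 2) * ∫ t in Ioi (0 : ℝ), Complex.exp (↑(-(z / 2) * (t + 1 / t))) * (t : ℂ) ^ (s - 1)

/-- The upper incomplete gamma function `Γ(a, x) = ∫_x^∞ e^{-t} t^{a-1} dt`. -/
noncomputable def GammaUpper (a x : ℝ) : ℝ :=
  ∫ t in Ioi x, Real.exp (-t) * t ^ (a - 1)

lemma gammaUpper_eq (m : ℕ) {x : ℝ} (hx : 0 < x) :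
    GammaUpper (1 + m) x
      = Real.exp (-x) * ∑ ℓ ∈ Finset.range (m + 1),
          ((m.factorial : ℝ) / (ℓ.factorial : ℝ)) * x ^ ℓ := by
  have hint : GammaUpper (1 + m) x = ∫ t in Ioi x, Real.exp (-t) * t ^ m := by
    unfold GammaUpper
    refine setIntegral_congr_fun measurableSet_Ioi (fun t ht => ?_)
    have ht0 : 0 < t := hx.trans ht
    rw [show (1 + (m : ℝ)) - 1 = (m : ℝ) by ring, Real.rpow_natCast]
  rw [hint]
  set g : ℝ → ℝ := fun t => -(Real.exp (-t) * ∑ ℓ ∈ Finset.range (m + 1),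
      ((m.factorial : ℝ) / (ℓ.factorial : ℝ)) * t ^ ℓ) with hg
  have hderiv : ∀ t : ℝ, HasDerivAt g (Real.exp (-t) * t ^ m) t := by
    intro t
    have h1 : HasDerivAt (fun t : ℝ => Real.exp (-t)) (-Real.exp (-t)) t := by
      simpa using (hasDerivAt_neg t).exp
    have h2 : HasDerivAt (fun t : ℝ => ∑ ℓ ∈ Finset.range (m + 1),
        ((m.factorial : ℝ) / (ℓ.factorial : ℝ)) * t ^ ℓ)
        (∑ ℓ ∈ Finset.range (m + 1),
          ((m.factorial : ℝ) / (ℓ.factorial : ℝ)) * (ℓ * t ^ (ℓ - 1))) t := by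
      refine HasDerivAt.fun_sum (fun ℓ _ => ?_)
      exact (hasDerivAt_pow ℓ t).const_mul _
    have h3 : HasDerivAt (fun t => -(Real.exp (-t) * ∑ ℓ ∈ Finset.range (m + 1),
        ((m.factorial : ℝ) / (ℓ.factorial : ℝ)) * t ^ ℓ)) _ t := (h1.mul h2).neg
    convert h3 using 1
    have hsum : (∑ ℓ ∈ Finset.range (m + 1),
        ((m.factorial : ℝ) / (ℓ.factorial : ℝ)) * (ℓ * t ^ (ℓ - 1)))
        = ∑ j ∈ Finset.range m, ((m.factorial : ℝ) / (j.factorial : ℝ)) * t ^ j := by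
      rw [Finset.sum_range_succ']
      simp only [Nat.cast_zero, zero_mul, mul_zero, add_zero]
      refine Finset.sum_congr rfl (fun j _ => ?_)
      have : ((j + 1).factorial : ℝ) = (j + 1) * (j.factorial : ℝ) := by
        rw [Nat.factorial_succ]; push_cast; ring
      rw [this]
      have hj : (j.factorial : ℝ) ≠ 0 := Nat.cast_ne_zero.2 (Nat.factorial_ne_zero j)
      have hj1 : ((j : ℝ) + 1) ≠ 0 := by positivity
      field_simp
      rw [Nat.add_sub_cancel]; push_cast; ring
    rw [hsum, Finset.sum_range_succ]
    have hm : ((m.factorial : ℝ) / (m.factorial : ℝ)) = 1 := by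
      rw [div_self (Nat.cast_ne_zero.2 (Nat.factorial_ne_zero m))]
    rw [hm]
    ring
  have htend : Filter.Tendsto g Filter.atTop (nhds 0) := by
    have key : Filter.Tendsto (fun t : ℝ => ∑ ℓ ∈ Finset.range (m + 1),
        ((m.factorial : ℝ) / (ℓ.factorial : ℝ)) * (t ^ ℓ * Real.exp (-t)))
        Filter.atTop (nhds 0) := by
      have h : ∀ ℓ ∈ Finset.range (m + 1), Filter.Tendsto
          (fun t : ℝ => ((m.factorial : ℝ) / (ℓ.factorial : ℝ)) * (t ^ ℓ * Real.exp (-t)))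
          Filter.atTop (nhds 0) := fun ℓ _ => by
        simpa using (Real.tendsto_pow_mul_exp_neg_atTop_nhds_zero ℓ).const_mul
          ((m.factorial : ℝ) / (ℓ.factorial : ℝ))
      simpa using tendsto_finset_sum _ h
    have : Filter.Tendsto (fun t : ℝ => Real.exp (-t) * ∑ ℓ ∈ Finset.range (m + 1),
        ((m.factorial : ℝ) / (ℓ.factorial : ℝ)) * t ^ ℓ) Filter.atTop (nhds 0) := by
      refine key.congr (fun t => ?_)
      rw [Finset.mul_sum]
      exact Finset.sum_congr rfl fun ℓ _ => by ring
    simpa [hg] using this.neg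
  have := integral_Ioi_of_hasDerivAt_of_nonneg
    (g := g) (g' := fun t => Real.exp (-t) * t ^ m) (a := x)
    (hderiv x).continuousAt.continuousWithinAt
    (fun t _ => hderiv t)
    (fun t ht => by have h0 : (0:ℝ) ≤ t := (hx.trans ht).le; positivity)
    htend
  rw [this, hg]
  ring

lemma integ_aux (A B : ℝ) (hA : 0 < A) (hB : 0 < B) (ℓ : ℕ) :
    IntegrableOn (fun x : ℝ => Real.exp (-(A * x + B / x)) * x ^ ℓ / x) (Ioi 0) := by
  have hmaj : IntegrableOn (fun x : ℝ => B⁻¹ * (x ^ (ℓ : ℝ) * Real.exp (-A * x))) (Ioi 0) := by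
    have h := integrableOn_rpow_mul_exp_neg_mul_rpow (s := (ℓ : ℝ)) (p := 1) (b := A)
      (lt_of_lt_of_le neg_one_lt_zero (Nat.cast_nonneg ℓ)) one_pos hA
    simpa [Real.rpow_one, IntegrableOn] using h.const_mul B⁻¹
  refine Integrable.mono hmaj ?_ ?_
  · apply Measurable.aestronglyMeasurable
    fun_prop
  · filter_upwards [ae_restrict_mem measurableSet_Ioi] with x hx
    have hx0 : 0 < x := hx
    have hexp : Real.exp (-(B / x)) ≤ x / B := by
      have h1 : B / x ≤ Real.exp (B / x) :=
        le_trans (le_add_of_nonneg_right zero_le_one) (Real.add_one_le_exp _)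
      have h2 : 0 < B / x := by positivity
      rw [Real.exp_neg]
      calc (Real.exp (B / x))⁻¹ ≤ (B / x)⁻¹ := by
            exact inv_anti₀ h2 h1
        _ = x / B := by rw [inv_div]
    have hfx : Real.exp (-(A * x + B / x)) * x ^ ℓ / x
        ≤ B⁻¹ * (x ^ ℓ * Real.exp (-A * x)) := by
      have : Real.exp (-(A * x + B / x)) = Real.exp (-A * x) * Real.exp (-(B / x)) := by
        rw [← Real.exp_add]; ring_nf
      rw [this]
      have hb : Real.exp (-A * x) * Real.exp (-(B / x)) * x ^ ℓ / x
          ≤ Real.exp (-A * x) * (x / B) * x ^ ℓ / x := by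
        have := mul_le_mul_of_nonneg_left hexp (Real.exp_pos (-A * x)).le
        have hxp : (0:ℝ) ≤ x ^ ℓ / x := by positivity
        calc Real.exp (-A * x) * Real.exp (-(B / x)) * x ^ ℓ / x
            = (Real.exp (-A * x) * Real.exp (-(B / x))) * (x ^ ℓ / x) := by ring
          _ ≤ (Real.exp (-A * x) * (x / B)) * (x ^ ℓ / x) :=
              mul_le_mul_of_nonneg_right this hxp
          _ = Real.exp (-A * x) * (x / B) * x ^ ℓ / x := by ring
      refine hb.trans (le_of_eq ?_)
      field_simp
    have h1 : ‖Real.exp (-(A * x + B / x)) * x ^ ℓ / x‖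
        = Real.exp (-(A * x + B / x)) * x ^ ℓ / x := by
      rw [Real.norm_eq_abs, abs_of_nonneg (by positivity)]
    have h2 : ‖B⁻¹ * (x ^ (ℓ : ℝ) * Real.exp (-A * x))‖
        = B⁻¹ * (x ^ ℓ * Real.exp (-A * x)) := by
      rw [Real.norm_eq_abs, abs_of_nonneg (by positivity), Real.rpow_natCast]
    rw [h1, h2]
    exact hfx

lemma subst_aux (A B : ℝ) (hA : 0 < A) (hB : 0 < B) (ℓ : ℕ) :
    (∫ x in Ioi (0:ℝ), Real.exp (-(A * x + B / x)) * x ^ ℓ / x)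
      = Real.sqrt (B / A) ^ ℓ
        * ∫ t in Ioi (0:ℝ), Real.exp (-(2 * Real.sqrt (A * B) / 2) * (t + 1 / t)) * t ^ ℓ / t := by
  set c := Real.sqrt (B / A) with hc
  have hcpos : 0 < c := Real.sqrt_pos.2 (by positivity)
  have hAc : A * c = Real.sqrt (A * B) := by
    rw [hc, Real.sqrt_div hB.le, Real.sqrt_mul hA.le]
    rw [div_eq_mul_inv, ← mul_assoc]
    rw [show A * Real.sqrt B * (Real.sqrt A)⁻¹ = (A / Real.sqrt A) * Real.sqrt B by ring,
      Real.div_sqrt]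
  have hBc : B / c = Real.sqrt (A * B) := by
    rw [hc, Real.sqrt_div hB.le, Real.sqrt_mul hA.le, div_div_eq_mul_div, div_eq_mul_inv,
      mul_comm B, mul_assoc]
    rw [show Real.sqrt A * (B * (Real.sqrt B)⁻¹) = Real.sqrt A * (B / Real.sqrt B) by ring,
      Real.div_sqrt]
  have key := integral_comp_mul_left_Ioi
    (fun x : ℝ => Real.exp (-(A * x + B / x)) * x ^ ℓ / x) 0 hcpos
  rw [mul_zero] at key
  have key2 : (∫ x in Ioi (0:ℝ), Real.exp (-(A * x + B / x)) * x ^ ℓ / x)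
      = c • ∫ x in Ioi (0:ℝ), Real.exp (-(A * (c * x) + B / (c * x))) * (c * x) ^ ℓ / (c * x) := by
    rw [key, smul_smul, mul_inv_cancel₀ hcpos.ne', one_smul]
  rw [key2, smul_eq_mul]
  have congr1 : (∫ x in Ioi (0:ℝ), Real.exp (-(A * (c * x) + B / (c * x))) * (c * x) ^ ℓ / (c * x))
      = ∫ t in Ioi (0:ℝ), (c ^ ℓ / c)
          * (Real.exp (-(2 * Real.sqrt (A * B) / 2) * (t + 1 / t)) * t ^ ℓ / t) := by
    refine setIntegral_congr_fun measurableSet_Ioi (fun t ht => ?_)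
    have ht0 : 0 < t := ht
    have harg : -(A * (c * t) + B / (c * t)) = -(2 * Real.sqrt (A * B) / 2) * (t + 1 / t) := by
      have : B / (c * t) = Real.sqrt (A * B) / t := by
        rw [div_mul_eq_div_div, hBc]
      rw [this, ← mul_assoc, hAc]
      field_simp
    rw [harg, mul_pow]
    field_simp
  rw [congr1, integral_const_mul]
  field_simp

lemma besselK_real (ℓ : ℕ) (z : ℝ) :
    besselK (ℓ : ℂ) z
      = ((1 / 2 * ∫ t in Ioi (0:ℝ), Real.exp (-(z / 2) * (t + 1 / t)) * t ^ ℓ / t : ℝ) : ℂ) := by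
  unfold besselK
  have h : (∫ t in Ioi (0:ℝ), Complex.exp (↑(-(z / 2) * (t + 1 / t))) * (t : ℂ) ^ ((ℓ : ℂ) - 1))
      = ∫ t in Ioi (0:ℝ), ((Real.exp (-(z / 2) * (t + 1 / t)) * t ^ ℓ / t : ℝ) : ℂ) := by
    refine setIntegral_congr_fun measurableSet_Ioi (fun t ht => ?_)
    have ht0 : 0 < t := ht
    have h1 : ((ℓ : ℂ) - 1) = (((ℓ : ℤ) - 1 : ℤ) : ℂ) := by push_cast; ring
    rw [h1, Complex.cpow_intCast]
    have h2 : (t : ℂ) ^ ((ℓ : ℤ) - 1) = ((t ^ ((ℓ : ℤ) - 1) : ℝ) : ℂ) := by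
      push_cast
      ring
    rw [h2, ← Complex.ofReal_exp, ← Complex.ofReal_mul]
    congr 1
    rw [zpow_sub_one₀ ht0.ne', zpow_natCast]
    field_simp
  have h2 : (∫ t in Ioi (0:ℝ), ((Real.exp (-(z / 2) * (t + 1 / t)) * t ^ ℓ / t : ℝ) : ℂ))
      = ((∫ t in Ioi (0:ℝ), Real.exp (-(z / 2) * (t + 1 / t)) * t ^ ℓ / t : ℝ) : ℂ) :=
    integral_ofReal
  rw [h, h2]
  push_cast
  ring

theorem incomplete_gamma_bessel_integral (m : ℕ) (n C N Y : ℝ)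
    (hn : 0 < n) (hC : 0 < C) (hN : 1 ≤ N) (hY : 0 < Y)
    (D : ℝ) (hD : D = C + 2 * π * n / Real.sqrt N) :
    ((∫ x in Ioi (0 : ℝ),
        Real.exp (-C * (Real.sqrt N * x + 1 / (Real.sqrt N * x))) * Real.exp (2 * π * n * x)
          * GammaUpper (1 + m) (4 * π * n * x) * Real.exp (-(1 / (x * Y))) / x : ℝ) : ℂ)
      = ∑ ℓ ∈ Finset.range (m + 1),
          (↑(2 * (m.factorial : ℝ) / (ℓ.factorial : ℝ)
              * (4 * π * Real.sqrt C / Real.sqrt N * Real.sqrt (1 + Real.sqrt N / (C * Y))) ^ ℓ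
              * (n / Real.sqrt D) ^ ℓ) : ℂ)
            * besselK (ℓ : ℂ) (2 * Real.sqrt (D * (C + Real.sqrt N / Y))) := by
  have hπ := Real.pi_pos
  set s := Real.sqrt N with hs
  have hs1 : 1 ≤ s := by
    rw [hs, show (1:ℝ) = Real.sqrt 1 by simp]
    exact Real.sqrt_le_sqrt hN
  have hs0 : 0 < s := lt_of_lt_of_le one_pos hs1
  set A : ℝ := C * s + 2 * π * n with hA'
  set B : ℝ := C / s + 1 / Y with hB'
  have hA : 0 < A := by positivity
  have hB : 0 < B := by positivity
  have hDpos : 0 < D := by rw [hD]; positivity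
  have hsD : 0 < Real.sqrt D := Real.sqrt_pos.2 hDpos
  set u : ℝ := 1 + s / (C * Y) with hu
  have hu0 : 0 < u := by positivity
  -- the argument of besselK
  have hz : D * (C + s / Y) = A * B := by
    rw [hD, hA', hB']
    field_simp
  -- base identity for the coefficient
  have h1 : B / A = (C * u) / ((s * s) * D) := by
    rw [hA', hB', hD, hu]
    rw [div_eq_div_iff (by positivity) (by positivity)]
    field_simp
  have hbase : 4 * π * n * Real.sqrt (B / A)
      = (4 * π * Real.sqrt C / s * Real.sqrt u) * (n / Real.sqrt D) := by
    rw [h1, Real.sqrt_div (by positivity) _, Real.sqrt_mul hC.le,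
      Real.sqrt_mul (by positivity : (0:ℝ) ≤ s * s), Real.sqrt_mul_self hs0.le]
    field_simp
  -- Step A: rewrite the integrand as a finite sum
  have stepA : (∫ x in Ioi (0 : ℝ),
      Real.exp (-C * (s * x + 1 / (s * x))) * Real.exp (2 * π * n * x)
        * GammaUpper (1 + m) (4 * π * n * x) * Real.exp (-(1 / (x * Y))) / x)
      = ∫ x in Ioi (0 : ℝ), ∑ ℓ ∈ Finset.range (m + 1),
          ((m.factorial : ℝ) / (ℓ.factorial : ℝ) * (4 * π * n) ^ ℓ)
            * (Real.exp (-(A * x + B / x)) * x ^ ℓ / x) := by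
    refine setIntegral_congr_fun measurableSet_Ioi (fun x hx => ?_)
    have hx0 : 0 < x := hx
    rw [gammaUpper_eq m (by positivity : 0 < 4 * π * n * x)]
    simp only [Finset.mul_sum, Finset.sum_mul, Finset.sum_div]
    refine Finset.sum_congr rfl (fun ℓ _ => ?_)
    have hsum : -C * (s * x + 1 / (s * x)) + 2 * π * n * x + -(4 * π * n * x) + -(1 / (x * Y))
        = -(A * x + B / x) := by
      rw [hA', hB']
      field_simp
      ring
    rw [← hsum, Real.exp_add, Real.exp_add, Real.exp_add, mul_pow]
    ring
  rw [stepA]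
  rw [integral_finset_sum _ (fun ℓ _ => ((integ_aux A B hA hB ℓ).const_mul _))]
  rw [Complex.ofReal_sum]
  refine Finset.sum_congr rfl (fun ℓ _ => ?_)
  have hzz : 2 * Real.sqrt (D * (C + s / Y)) = 2 * Real.sqrt (A * B) := by rw [hz]
  rw [integral_const_mul, hzz, besselK_real, ← Complex.ofReal_mul]
  refine congrArg Complex.ofReal ?_
  rw [subst_aux A B hA hB ℓ]
  have hpow : (4 * π * n) ^ ℓ * Real.sqrt (B / A) ^ ℓ
      = (4 * π * Real.sqrt C / s * Real.sqrt u) ^ ℓ * (n / Real.sqrt D) ^ ℓ := by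
    rw [← mul_pow, hbase, mul_pow]
  calc (m.factorial : ℝ) / (ℓ.factorial : ℝ) * (4 * π * n) ^ ℓ
        * (Real.sqrt (B / A) ^ ℓ
            * ∫ t in Ioi (0:ℝ), Real.exp (-(2 * Real.sqrt (A * B) / 2) * (t + 1 / t)) * t ^ ℓ / t)
      = (m.factorial : ℝ) / (ℓ.factorial : ℝ) * ((4 * π * n) ^ ℓ * Real.sqrt (B / A) ^ ℓ)
        * ∫ t in Ioi (0:ℝ), Real.exp (-(2 * Real.sqrt (A * B) / 2) * (t + 1 / t)) * t ^ ℓ / t := by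
        ring
    _ = _ := by rw [hpow]; ring
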